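/- Let 0 < p < 1/2, ε > 0, 0 < α < v(p), β > 1, q := ⌈v(p)/(1−v(p))⌉ and m ≥ q, and let ν₀ = δ₀, ν₁, …, ν_m be an (ε,α,β)-admissible sequence of measures. Set K := Σ_{i=0}^{m−1} #supp(ν_i) and δ := 1 − exp(−log(β)/m). Let B be the event that min X^N_i < (v(p) − α)·i for all 1 ≤ i ≤ m. Then P(B) ≤ 2K·exp(−N·β^{−1}·ε·p·δ²). -/

import Mathlib

/-!
On the event in question the minimum at time `i` lies strictly to the left of the support of
`ν_i`, so selection never removes a particle sitting on that support. Suppose that at every time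
`i < m` each site `x` of the support of `ν_i` holding `n ≥ N β⁻¹ ε` particles sends at least
`(1 - δ) 2 p n` children to `x + 1` and `(1 - δ) 2 (1 - p) n` children to `x`. Since
`ν_{i+1} ≤ F^{Br.}(ν_i)` and `ν_i ≥ ε` on its support, induction gives at least
`N (1 - δ)^i ν_i(x)` particles at every `x`, hence at least `N (1 - δ)^m ν_m(ℤ) ≥ N β⁻¹ (β + 1)`,
i.e. more than `N`, particles at time `m`, which is absurd. Each of the `2K` ways this can fail
is a lower deviation of a binomial variable with at least `2 N β⁻¹ ε` trials and success
probability at least `p`; given which particles sit at `x`, it is independent of the past, and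
Chernoff's bound makes its probability at most `exp (-N β⁻¹ ε p δ²)`.
-/

open MeasureTheory ProbabilityTheory Filter

noncomputable section

/-- The random walk step distribution `p·δ₁ + (1−p)·δ₀` on `ℤ`. -/
def bernoulliStep (p : ℝ) : Measure ℤ :=
  ENNReal.ofReal p • Measure.dirac 1 + ENNReal.ofReal (1 - p) • Measure.dirac 0

/-- One branching-selection step: each of the `N` particles at positions `x i` branches into
two particles, displaced by `y i 0` and `y i 1` respectively; of the `2N` resulting particles
only the `N` rightmost are kept, listed in decreasing order. -/
def nextPop (N : ℕ) (x : Fin N → ℤ) (y : Fin N → Fin 2 → ℤ) : Fin N → ℤ :=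
  fun i =>
    (((Finset.univ.val.map fun q : Fin N × Fin 2 => x q.1 + y q.1 q.2).sort (· ≥ ·)).getD i 0)

variable {Ω : Type*}

/-- The branching-selection particle system with `N` particles driven by the noise family `Y`
(`Y n i ℓ` is the displacement of the `ℓ`-th offspring of the `i`-th particle at time `n`),
started from `N` particles at the origin. -/
def chain (N : ℕ) (Y : ℕ → ℕ → Fin 2 → Ω → ℤ) : ℕ → Ω → Fin N → ℤ
  | 0 => fun _ _ => 0
  | n + 1 => fun ω => nextPop N (chain N Y n ω) fun i ℓ => Y n i.val ℓ ω

/-- Maximal position in a population. -/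
def maxPop {N : ℕ} (x : Fin N → ℤ) : ℤ :=
  ((Finset.univ.val.map x).sort (· ≤ ·)).getLastD 0

/-- Minimal position in a population. -/
def minPop {N : ℕ} (x : Fin N → ℤ) : ℤ :=
  ((Finset.univ.val.map x).sort (· ≤ ·)).headD 0

/-- The large deviations rate function `Λ` for sums of i.i.d. Bernoulli(`p`) variables. -/
def rateFn (p x : ℝ) : ℝ :=
  x * Real.log (x / p) + (1 - x) * Real.log ((1 - x) / (1 - p))

/-- `a_m = ⌊m^{1/3}⌋`. -/
def am (m : ℕ) : ℕ := ⌊(m : ℝ) ^ ((1 : ℝ) / 3)⌋₊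

/-- `c_m = ⌊m^{2/3}⌋`. -/
def cm (m : ℕ) : ℕ := ⌊(m : ℝ) ^ ((2 : ℝ) / 3)⌋₊

/-- `s_m = ⌊a_m / (2(1 − v(p)))⌋`. -/
def sm (vp : ℝ) (m : ℕ) : ℕ := ⌊(am m : ℝ) / (2 * (1 - vp))⌋₊

/-- The upper barrier `d_m`. -/
def dBar (vp : ℝ) (m k : ℕ) : ℝ :=
  if k ≤ sm vp m then (k : ℝ) else vp * k + am m

/-- The lower barrier `g_m`. -/
def gBar (vp : ℝ) (A m k : ℕ) : ℝ :=
  if k ≤ sm vp m then (k : ℝ)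
  else if k ≤ m - cm m then vp * ((k : ℝ) + 1)
  else vp * k - A * am m

/-- The random walk with increments `ξ`, started at `0`. -/
def walk {Ω : Type*} (ξ : ℕ → Ω → ℤ) (k : ℕ) (ω : Ω) : ℤ :=
  ∑ j ∈ Finset.range k, ξ j ω

/-- `q = ⌈v(p)/(1 − v(p))⌉`. -/
def qval (vp : ℝ) : ℕ := ⌈vp / (1 - vp)⌉₊

/-- The infinite-population branching operator `F^{Br.}(ν) = 2·ν ⋆ (p·δ₁ + (1−p)·δ₀)`. -/
def FBr (p : ℝ) (ν : ℤ → ℝ) : ℤ → ℝ :=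
  fun x => 2 * (p * ν (x - 1) + (1 - p) * ν x)

/-- An `(ε,α,β)`-admissible sequence `ν₀ = δ₀, ν₁, …, ν_m` of finitely supported positive
measures on `ℤ` (a measure is represented by its density `ℤ → ℝ`): (i) `ν_i = (2p)^i·δ_i`
for `i ≤ q`; (ii) `ν_i ≤ F^{Br.}(ν_{i−1})` for `q+1 ≤ i ≤ m`; (iii) every point with
positive mass of `ν_i`, `i ≤ m−1`, has mass at least `ε`; (iv) for `q ≤ i ≤ m−1` the
support of `ν_i` lies in `[(v(p)−α)(i+1), ∞)`; (v) `ν_m(ℤ) ≥ β + 1`. -/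
def Admissible (p vp ε α β : ℝ) (m : ℕ) (ν : ℕ → ℤ → ℝ) : Prop :=
  (∀ i x, 0 ≤ ν i x) ∧
  (∀ i, (Function.support (ν i)).Finite) ∧
  (∀ i ≤ qval vp, ∀ x : ℤ, ν i x = if x = (i : ℤ) then (2 * p) ^ i else 0) ∧
  (∀ i : ℕ, qval vp + 1 ≤ i → i ≤ m → ∀ x : ℤ, ν i x ≤ FBr p (ν (i - 1)) x) ∧
  (∀ i ≤ m - 1, ∀ x : ℤ, 0 < ν i x → ε ≤ ν i x) ∧
  (∀ i : ℕ, qval vp ≤ i → i ≤ m - 1 → ∀ x : ℤ,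
    0 < ν i x → (vp - α) * ((i : ℝ) + 1) ≤ (x : ℝ)) ∧
  (β + 1 ≤ ∑ᶠ x : ℤ, ν m x)

section Selection

variable {N : ℕ}

def population (x : Fin N → ℤ) : Multiset ℤ := Finset.univ.val.map x

def offspring (x : Fin N → ℤ) (y : Fin N → Fin 2 → ℤ) : Multiset ℤ :=
  Finset.univ.val.map fun q : Fin N × Fin 2 => x q.1 + y q.1 q.2

def childCount (x : Fin N → ℤ) (y : Fin N → Fin 2 → ℤ) (z d : ℤ) : ℕ :=
  (Finset.univ.filter fun q : Fin N × Fin 2 => x q.1 = z ∧ y q.1 q.2 = d).card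

lemma card_population (x : Fin N → ℤ) : Multiset.card (population x) = N := by
  simp [population]

lemma card_offspring (x : Fin N → ℤ) (y : Fin N → Fin 2 → ℤ) :
    Multiset.card (offspring x y) = 2 * N := by
  simp [offspring, mul_comm]

lemma population_nextPop (x : Fin N → ℤ) (y : Fin N → Fin 2 → ℤ) :
    population (nextPop N x y) = (((offspring x y).sort (· ≥ ·)).take N : List ℤ) := by
  have hN : N ≤ ((offspring x y).sort (· ≥ ·)).length := by
    rw [Multiset.length_sort, card_offspring]; omega
  rw [population, Fin.univ_val_map]
  congr 1
  refine List.ext_getElem (by simpa using hN) fun k hk _ => ?_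
  simp only [List.getElem_ofFn, List.getElem_take, nextPop]
  exact List.getD_eq_getElem _ _ _

lemma minPop_mem_population (hN : 0 < N) (x : Fin N → ℤ) : minPop x ∈ population x := by
  have hne : (population x).sort (· ≤ ·) ≠ [] := by
    rw [← List.length_pos_iff, Multiset.length_sort, card_population]; exact hN
  obtain ⟨a, l, hl⟩ := List.exists_cons_of_ne_nil hne
  rw [← Multiset.mem_sort (· ≤ ·)]
  change ((population x).sort (· ≤ ·)).headD 0 ∈ _
  simp [hl]

/-- Selection only discards children lying weakly to the left of every survivor, so above the
new minimum it keeps all of them. -/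
lemma count_nextPop_of_minPop_lt (hN : 0 < N) (x : Fin N → ℤ) (y : Fin N → Fin 2 → ℤ) {z : ℤ}
    (hz : minPop (nextPop N x y) < z) :
    (population (nextPop N x y)).count z = (offspring x y).count z := by
  set l := (offspring x y).sort (· ≥ ·)
  have hpop : population (nextPop N x y) = (l.take N : Multiset ℤ) := population_nextPop x y
  have hsplit : l.Pairwise (· ≥ ·) := Multiset.pairwise_sort _ _
  rw [← List.take_append_drop N l] at hsplit
  have hdrop : z ∉ l.drop N := fun hzl =>
    have hmin := Multiset.mem_coe.1 (hpop ▸ minPop_mem_population hN (nextPop N x y))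
    not_le.2 hz ((List.pairwise_append.1 hsplit).2.2 _ hmin _ hzl)
  have hl : offspring x y = (l : Multiset ℤ) := (Multiset.sort_eq _ _).symm
  rw [hpop, hl, Multiset.coe_count, Multiset.coe_count]
  conv_rhs => rw [← List.take_append_drop N l]
  rw [List.count_append, List.count_eq_zero.2 hdrop, add_zero]

lemma childCount_add_childCount_le_count (x : Fin N → ℤ) (y : Fin N → Fin 2 → ℤ) (z : ℤ) :
    childCount x y (z - 1) 1 + childCount x y z 0 ≤ (offspring x y).count z := by
  rw [childCount, childCount, offspring, Multiset.count_map, ← Finset.filter_val,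
    Finset.card_val, ← Finset.card_union_of_disjoint]
  · refine Finset.card_le_card fun q hq => ?_
    simp only [Finset.mem_union, Finset.mem_filter, Finset.mem_univ, true_and] at hq ⊢
    omega
  · exact Finset.disjoint_filter.2 fun q _ h1 h2 => by omega

lemma count_population (x : Fin N → ℤ) (z : ℤ) :
    (population x).count z = (Finset.univ.filter fun j => x j = z).card := by
  simp only [population, Multiset.count_map, eq_comm]
  rfl

lemma childCount_eq_sum (x : Fin N → ℤ) (y : Fin N → Fin 2 → ℤ) (z d : ℤ) :
    (childCount x y z d : ℝ) = ∑ q ∈ (Finset.univ.filter fun j => x j = z) ×ˢ Finset.univ,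
      if y q.1 q.2 = d then (1 : ℝ) else 0 := by
  rw [Finset.sum_boole, childCount]
  congr 2
  ext q
  simp

end Selection

lemma chain_congr {Ω' : Type*} {N : ℕ} {Y : ℕ → ℕ → Fin 2 → Ω → ℤ}
    {Y' : ℕ → ℕ → Fin 2 → Ω' → ℤ} {ω : Ω} {ω' : Ω'} :
    ∀ {i : ℕ}, (∀ n < i, ∀ j < N, ∀ ℓ, Y n j ℓ ω = Y' n j ℓ ω') →
      chain N Y i ω = chain N Y' i ω'
  | 0, _ => rfl
  | i + 1, h => by
    change nextPop N (chain N Y i ω) (fun j ℓ => Y i j ℓ ω)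
      = nextPop N (chain N Y' i ω') (fun j ℓ => Y' i j ℓ ω')
    rw [chain_congr fun n hn => h n (by omega)]
    congr
    funext j ℓ
    exact h i (by omega) j j.isLt ℓ

lemma Multiset.sum_count_le_card {ι : Type*} [DecidableEq ι] (T : Finset ι) (s : Multiset ι) :
    ∑ x ∈ T, s.count x ≤ Multiset.card s :=
  calc ∑ x ∈ T, s.count x ≤ ∑ x ∈ T ∪ s.toFinset, s.count x :=
        Finset.sum_le_sum_of_subset Finset.subset_union_left
    _ = Multiset.card s := Multiset.sum_count_eq_card fun _ hx =>
        Finset.mem_union_right _ (Multiset.mem_toFinset.2 hx)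

namespace Admissible

variable {p vp ε α β : ℝ} {m : ℕ} {ν : ℕ → ℤ → ℝ}

lemma nonneg (hν : Admissible p vp ε α β m ν) (i : ℕ) (x : ℤ) : 0 ≤ ν i x := hν.1 i x

lemma finite_support (hν : Admissible p vp ε α β m ν) (i : ℕ) : (Function.support (ν i)).Finite :=
  hν.2.1 i

lemma le_apply_of_pos (hν : Admissible p vp ε α β m ν) {i : ℕ} (hi : i < m) {x : ℤ}
    (hx : 0 < ν i x) : ε ≤ ν i x :=
  hν.2.2.2.2.1 i (by omega) x hx

lemma mass_le (hν : Admissible p vp ε α β m ν) : β + 1 ≤ ∑ᶠ x, ν m x := hν.2.2.2.2.2.2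

lemma zero_apply (hν : Admissible p vp ε α β m ν) (x : ℤ) :
    ν 0 x = if x = 0 then 1 else 0 := by
  simpa using hν.2.2.1 0 (Nat.zero_le _) x

lemma one_le (hν : Admissible p vp ε α β m ν) (hβ : 1 < β) : 1 ≤ m := by
  by_contra! hm
  have hmass := hν.mass_le
  rw [Nat.lt_one_iff.1 hm, finsum_eq_single _ 0 fun x hx => by rw [hν.zero_apply, if_neg hx],
    hν.zero_apply, if_pos rfl] at hmass
  linarith

lemma le_FBr (hν : Admissible p vp ε α β m ν) (hp0 : 0 ≤ p) (hp1 : p ≤ 1) {i : ℕ}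
    (hi : i + 1 ≤ m) (x : ℤ) : ν (i + 1) x ≤ FBr p (ν i) x := by
  obtain ⟨hpos, -, hinit, hrec, -⟩ := hν
  by_cases hq : i + 1 ≤ qval vp
  · rw [hinit (i + 1) hq]
    split_ifs with hx
    · rw [FBr, hinit i (by omega), hinit i (by omega), if_pos (by omega), if_neg (by omega),
        pow_succ]
      linarith
    · have := hpos i (x - 1); have := hpos i x
      simp only [FBr]; nlinarith
  · simpa using hrec (i + 1) (by omega) hi x

/-- For `i = m` this is inherited from `ν_{m-1}` through `ν_m ≤ F^{Br.}(ν_{m-1})`. -/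
lemma mul_le_of_apply_pos (hν : Admissible p vp ε α β m ν) (h0 : 0 ≤ vp - α) (h1 : vp - α ≤ 1)
    {i : ℕ} (hi1 : 1 ≤ i) (him : i ≤ m) {x : ℤ} (hx : 0 < ν i x) :
    (vp - α) * i ≤ x := by
  obtain ⟨hpos, -, hinit, hrec, -, hsupp, -⟩ := hν
  by_cases hq : i ≤ qval vp
  · rw [hinit i hq] at hx
    split_ifs at hx with hxi
    · rw [hxi, Int.cast_natCast]
      exact mul_le_of_le_one_left (Nat.cast_nonneg i) h1
    · exact absurd hx (lt_irrefl 0)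
  by_cases him1 : i ≤ m - 1
  · nlinarith [hsupp i (by omega) him1 x hx]
  obtain rfl : i = m := by omega
  have hcast : ((i - 1 : ℕ) : ℝ) + 1 = i := by rw [Nat.cast_sub hi1]; ring
  have hFBr := hrec i (by omega) le_rfl x
  by_cases hprev : 0 < ν (i - 1) x
  · have := hsupp (i - 1) (by omega) le_rfl x hprev
    rw [hcast] at this; exact this
  · have hprev' : 0 < ν (i - 1) (x - 1) := by
      by_contra hc
      rw [FBr, le_antisymm (not_lt.1 hc) (hpos _ _), le_antisymm (not_lt.1 hprev) (hpos _ _)]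
        at hFBr
      linarith
    have := hsupp (i - 1) (by omega) le_rfl (x - 1) hprev'
    rw [hcast, Int.cast_sub, Int.cast_one] at this; linarith

end Admissible

def stepWeight (p : ℝ) (d : ℤ) : ℝ := if d = 1 then p else 1 - p

section Trajectory

variable {N : ℕ} {X : ℕ → Fin N → ℤ} {y : ℕ → Fin N → Fin 2 → ℤ}
  {p vp ε α β δ : ℝ} {m : ℕ} {ν : ℕ → ℤ → ℝ}

lemma mul_le_count_population (hN : 0 < N) (hX0 : X 0 = 0)
    (hX : ∀ i, X (i + 1) = nextPop N (X i) (y i)) (hν : Admissible p vp ε α β m ν)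
    (hp0 : 0 ≤ p) (hp1 : p ≤ 1) (hδ : δ ≤ 1) (hε : 0 ≤ ε) (hβ : ∀ i ≤ m, β⁻¹ ≤ (1 - δ) ^ i)
    (hmin : ∀ i, 1 ≤ i → i ≤ m → ∀ x, 0 < ν i x → minPop (X i) < x)
    (hgood : ∀ i < m, ∀ x, 0 < ν i x → ∀ d : ℤ, (d = 0 ∨ d = 1) →
      N * β⁻¹ * ε ≤ ((population (X i)).count x : ℝ) →
      2 * stepWeight p d * (1 - δ) * (population (X i)).count x ≤ childCount (X i) (y i) x d) :
    ∀ i ≤ m, ∀ x, N * (1 - δ) ^ i * ν i x ≤ (population (X i)).count x := by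
  intro i
  induction i with
  | zero =>
    intro _ x
    by_cases hx : x = 0 <;> simp [hX0, hν.zero_apply, population, Multiset.map_const', hx]
  | succ i ih =>
    intro hi x
    have hchild : ∀ z (d : ℤ), (d = 0 ∨ d = 1) →
        2 * stepWeight p d * (1 - δ) * (N * (1 - δ) ^ i * ν i z) ≤ childCount (X i) (y i) z d := by
      intro z d hd
      rcases (hν.nonneg i z).eq_or_lt with hz | hz
      · rw [← hz]; simp
      have hcount := ih (by omega) z
      have hw : 0 ≤ 2 * stepWeight p d * (1 - δ) := by
        unfold stepWeight; split_ifs <;> nlinarith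
      refine (mul_le_mul_of_nonneg_left hcount hw).trans (hgood i (by omega) z hz d hd ?_)
      calc (N : ℝ) * β⁻¹ * ε ≤ N * (1 - δ) ^ i * ν i z := by
            gcongr
            exacts [hβ i (by omega), hν.le_apply_of_pos (by omega) hz]
        _ ≤ _ := hcount
    rcases (hν.nonneg (i + 1) x).eq_or_lt with hx | hx
    · rw [← hx, mul_zero]; positivity
    rw [hX, count_nextPop_of_minPop_lt hN (X i) (y i) (hX i ▸ hmin (i + 1) (by omega) hi x hx)]
    calc (N : ℝ) * (1 - δ) ^ (i + 1) * ν (i + 1) x ≤ N * (1 - δ) ^ (i + 1) * FBr p (ν i) x := by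
          have : 0 ≤ 1 - δ := by linarith
          gcongr
          exact hν.le_FBr hp0 hp1 hi x
      _ = 2 * stepWeight p 1 * (1 - δ) * (N * (1 - δ) ^ i * ν i (x - 1))
          + 2 * stepWeight p 0 * (1 - δ) * (N * (1 - δ) ^ i * ν i x) := by
          simp only [FBr, stepWeight, if_pos, if_neg zero_ne_one]; ring
      _ ≤ childCount (X i) (y i) (x - 1) 1 + childCount (X i) (y i) x 0 :=
          add_le_add (hchild _ _ (Or.inr rfl)) (hchild _ _ (Or.inl rfl))
      _ ≤ _ := by exact_mod_cast childCount_add_childCount_le_count _ _ x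

theorem exists_bad_step (hN : 0 < N) (hX0 : X 0 = 0)
    (hX : ∀ i, X (i + 1) = nextPop N (X i) (y i)) (hν : Admissible p vp ε α β m ν)
    (hp0 : 0 ≤ p) (hp1 : p ≤ 1) (hε : 0 ≤ ε) (hβ : 1 < β) (hδ0 : 0 ≤ δ) (hδ1 : δ ≤ 1)
    (hδm : (1 - δ) ^ m = β⁻¹) (hα0 : 0 ≤ vp - α) (hα1 : vp - α ≤ 1)
    (hB : ∀ i, 1 ≤ i → i ≤ m → (minPop (X i) : ℝ) < (vp - α) * i) :
    ∃ i < m, ∃ x, 0 < ν i x ∧ ∃ d : ℤ, (d = 0 ∨ d = 1) ∧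
      N * β⁻¹ * ε ≤ ((population (X i)).count x : ℝ) ∧
      (childCount (X i) (y i) x d : ℝ) <
        2 * stepWeight p d * (1 - δ) * (population (X i)).count x := by
  by_contra! hgood
  have hmin : ∀ i, 1 ≤ i → i ≤ m → ∀ x, 0 < ν i x → minPop (X i) < x := fun i hi1 him x hx => by
    exact_mod_cast (hB i hi1 him).trans_le (hν.mul_le_of_apply_pos hα0 hα1 hi1 him hx)
  have hpow : ∀ i ≤ m, β⁻¹ ≤ (1 - δ) ^ i := fun i hi =>
    hδm ▸ pow_le_pow_of_le_one (by linarith) (by linarith) hi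
  have hcount := mul_le_count_population hN hX0 hX hν hp0 hp1 hδ1 hε hpow hmin hgood m le_rfl
  set T := (hν.finite_support m).toFinset
  have hlo : N * β⁻¹ * (β + 1) ≤ ∑ x ∈ T, ((population (X m)).count x : ℝ) :=
    calc N * β⁻¹ * (β + 1) ≤ N * β⁻¹ * ∑ᶠ x, ν m x := by
          gcongr; exact hν.mass_le
      _ = ∑ x ∈ T, N * (1 - δ) ^ m * ν m x := by
          rw [finsum_eq_sum _ (hν.finite_support m), Finset.mul_sum, hδm]
      _ ≤ _ := Finset.sum_le_sum fun x _ => hcount x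
  have hup : ∑ x ∈ T, ((population (X m)).count x : ℝ) ≤ N := by
    exact_mod_cast (Multiset.sum_count_le_card T _).trans (card_population _).le
  have hN' : (0 : ℝ) < N * β⁻¹ := by positivity
  have : (N : ℝ) * β⁻¹ * (β + 1) = N + N * β⁻¹ := by field_simp
  linarith

end Trajectory

lemma bernoulliStep_ne_zero (p : ℝ) : bernoulliStep p ≠ 0 := by
  intro h
  have := congrArg (fun μ : Measure ℤ => μ Set.univ) h
  simp only [bernoulliStep, Measure.add_apply, Measure.smul_apply, measure_univ, smul_eq_mul,
    mul_one, Measure.coe_zero, Pi.zero_apply, add_eq_zero, ENNReal.ofReal_eq_zero] at this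
  linarith [this.1, this.2]

lemma integral_bernoulliStep {p : ℝ} (hp0 : 0 ≤ p) (hp1 : p ≤ 1) (f : ℤ → ℝ) :
    ∫ z, f z ∂bernoulliStep p = p * f 1 + (1 - p) * f 0 := by
  have hint (a : ℤ) : Integrable f (Measure.dirac a) := integrable_dirac enorm_lt_top
  rw [bernoulliStep, integral_add_measure ((hint 1).smul_measure ENNReal.ofReal_ne_top)
    ((hint 0).smul_measure ENNReal.ofReal_ne_top), integral_smul_measure, integral_smul_measure,
    integral_dirac, integral_dirac, ENNReal.toReal_ofReal hp0,
    ENNReal.toReal_ofReal (by linarith), smul_eq_mul, smul_eq_mul]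

section Probability

variable {mΩ : MeasurableSpace Ω} {μ : Measure Ω}

lemma mgf_ite_eq_of_map_eq_bernoulliStep {W : Ω → ℤ} (hW : Measurable W) {p : ℝ} (hp0 : 0 ≤ p)
    (hp1 : p ≤ 1) (hlaw : μ.map W = bernoulliStep p) {d : ℤ} (hd : d = 0 ∨ d = 1) (t : ℝ) :
    mgf (fun ω => if W ω = d then (1 : ℝ) else 0) μ t
      = stepWeight p d * Real.exp t + (1 - stepWeight p d) := by
  calc mgf (fun ω => if W ω = d then (1 : ℝ) else 0) μ t
      = ∫ z, Real.exp (t * if z = d then 1 else 0) ∂μ.map W := by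
        rw [integral_map hW.aemeasurable Measurable.of_discrete.aestronglyMeasurable]; rfl
    _ = _ := by
        rw [hlaw, integral_bernoulliStep hp0 hp1]
        rcases hd with rfl | rfl <;> simp [stepWeight]; ring

lemma sq_div_two_le_add_mul_log {δ : ℝ} (h0 : 0 ≤ δ) (h1 : δ < 1) :
    δ ^ 2 / 2 ≤ δ + (1 - δ) * Real.log (1 - δ) := by
  let F : ℝ → ℝ := fun u => u + (1 - u) * Real.log (1 - u) - u ^ 2 / 2
  have hF : ∀ u < 1, HasDerivAt F (-Real.log (1 - u) - u) u := by
    intro u hu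
    have hsub : HasDerivAt (fun v : ℝ => 1 - v) (-1) u := by
      simpa using (hasDerivAt_id u).const_sub 1
    have : 1 - u ≠ 0 := by linarith
    refine HasDerivAt.congr_deriv (f := F) (((hasDerivAt_id' u).add
      (hsub.mul (hsub.log this))).sub ((hasDerivAt_pow 2 u).div_const 2)) ?_
    field_simp
    ring
  suffices MonotoneOn F (Set.Icc 0 δ) by
    simpa [F] using this ⟨le_rfl, h0⟩ ⟨h0, le_rfl⟩ h0
  refine monotoneOn_of_hasDerivWithinAt_nonneg (convex_Icc 0 δ)
    (fun u hu => (hF u (by linarith [hu.2])).continuousAt.continuousWithinAt)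
    (fun u hu => (hF u (by linarith [(interior_subset hu : u ∈ Set.Icc 0 δ).2])).hasDerivWithinAt)
    ?_
  intro u hu
  rw [interior_Icc] at hu
  linarith [Real.log_le_sub_one_of_pos (show 0 < 1 - u by linarith [hu.2])]

theorem chernoff_lower_tail [IsProbabilityMeasure μ] {ι : Type*} {Z : ι → Ω → ℝ}
    (hmeas : ∀ k, Measurable (Z k)) (hindep : iIndepFun Z μ) {r : ℝ} (hr0 : 0 ≤ r) (hr1 : r ≤ 1)
    (hmgf : ∀ k t, mgf (Z k) μ t = r * Real.exp t + (1 - r)) (s : Finset ι) {δ : ℝ}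
    (hδ0 : 0 ≤ δ) (hδ1 : δ < 1) :
    μ.real {ω | ∑ k ∈ s, Z k ω ≤ (1 - δ) * r * s.card}
      ≤ Real.exp (-(s.card * r * δ ^ 2 / 2)) := by
  set t := Real.log (1 - δ)
  have ht : Real.exp t = 1 - δ := Real.exp_log (by linarith)
  have hmgf_t (k : ι) : mgf (Z k) μ t = 1 - r * δ := by rw [hmgf, ht]; ring
  have hrδ : 0 < 1 - r * δ := by nlinarith
  have hint : Integrable (fun ω => Real.exp (t * (∑ k ∈ s, Z k) ω)) μ := by
    refine hindep.integrable_exp_mul_sum hmeas fun k _ => ?_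
    by_contra h
    have := hmgf_t k
    rw [mgf, integral_undef h] at this
    linarith
  have hchernoff := measure_le_le_exp_mul_mgf ((1 - δ) * r * s.card)
    (Real.log_nonpos (by linarith) (by linarith)) hint
  rw [hindep.mgf_sum hmeas, Finset.prod_congr rfl fun k _ => hmgf_t k, Finset.prod_const]
    at hchernoff
  simp only [Finset.sum_apply] at hchernoff
  refine hchernoff.trans ?_
  have hpow : (1 - r * δ) ^ s.card ≤ Real.exp (-(r * δ)) ^ s.card :=
    pow_le_pow_left₀ hrδ.le (Real.one_sub_le_exp_neg _) _
  have hlog := mul_le_mul_of_nonneg_left (sq_div_two_le_add_mul_log hδ0 hδ1)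
    (mul_nonneg (Nat.cast_nonneg s.card) hr0)
  calc Real.exp (-t * ((1 - δ) * r * s.card)) * (1 - r * δ) ^ s.card
      ≤ Real.exp (-t * ((1 - δ) * r * s.card)) * Real.exp (-(r * δ)) ^ s.card := by gcongr
    _ = Real.exp (-(s.card * r * (δ + (1 - δ) * t))) := by
        rw [← Real.exp_nat_mul, ← Real.exp_add]; ring_nf
    _ ≤ _ := Real.exp_le_exp.2 (by nlinarith)

lemma measure_le_of_forall_fiber {α : Type*} [Fintype α] [IsProbabilityMeasure μ] (f : Ω → α)
    (hf : ∀ a, MeasurableSet (f ⁻¹' {a})) (C : α → Set Ω) {c : ENNReal}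
    (h : ∀ a, μ (f ⁻¹' {a} ∩ C a) ≤ μ (f ⁻¹' {a}) * c) :
    μ {ω | ω ∈ C (f ω)} ≤ c := by
  have hunion : {ω | ω ∈ C (f ω)} = ⋃ a, f ⁻¹' {a} ∩ C a := by ext ω; simp
  calc μ {ω | ω ∈ C (f ω)} ≤ ∑ a, μ (f ⁻¹' {a} ∩ C a) := hunion ▸ measure_iUnion_fintype_le _ _
    _ ≤ ∑ a, μ (f ⁻¹' {a}) * c := Finset.sum_le_sum fun a _ => h a
    _ = c := by
        rw [← Finset.sum_mul, sum_measure_preimage_singleton _ fun a _ => hf a]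
        simp

end Probability

def badStep (N : ℕ) (Y : ℕ → ℕ → Fin 2 → Ω → ℤ) (p δ n₀ : ℝ) (i : ℕ) (x d : ℤ) : Set Ω :=
  {ω | n₀ ≤ ((population (chain N Y i ω)).count x : ℝ) ∧
    (childCount (chain N Y i ω) (fun j ℓ => Y i j ℓ ω) x d : ℝ) <
      2 * stepWeight p d * (1 - δ) * (population (chain N Y i ω)).count x}

section Noise

variable {mΩ : MeasurableSpace Ω} {μ : Measure Ω} {N : ℕ} {Y : ℕ → ℕ → Fin 2 → Ω → ℤ}

lemma measurable_chain (hmeas : ∀ n j ℓ, Measurable (Y n j ℓ)) : ∀ i, Measurable (chain N Y i)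
  | 0 => measurable_const
  | i + 1 => (Measurable.of_discrete (f := fun v : (Fin N → ℤ) × (Fin N → Fin 2 → ℤ) =>
      nextPop N v.1 v.2)).comp ((measurable_chain hmeas i).prodMk
        (measurable_pi_lambda _ fun j => measurable_pi_lambda _ fun ℓ => hmeas i j ℓ))

/-- The population at time `i` is a function of the noise at times `< i` only. -/
lemma indepFun_chain_noise (hmeas : ∀ n j ℓ, Measurable (Y n j ℓ))
    (hiid : iIndepFun (fun q : ℕ × ℕ × Fin 2 => Y q.1 q.2.1 q.2.2) μ) (i : ℕ) :
    IndepFun (chain N Y i) (fun ω (j : Fin N) ℓ => Y i j ℓ ω) μ := by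
  classical
  let past : Finset (ℕ × ℕ × Fin 2) := Finset.range i ×ˢ Finset.range N ×ˢ Finset.univ
  let now : Finset (ℕ × ℕ × Fin 2) := {i} ×ˢ Finset.range N ×ˢ Finset.univ
  have hdisj : Disjoint past now := Finset.disjoint_left.2 fun q hq hq' => by
    simp only [past, now, Finset.mem_product, Finset.mem_range, Finset.mem_singleton] at hq hq'
    omega
  have hmem (j : Fin N) (ℓ : Fin 2) : ((i, j, ℓ) : ℕ × ℕ × Fin 2) ∈ now := by simp [now]
  have key := (hiid.indepFun_finset past now hdisj fun q => hmeas _ _ _).comp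
    (Measurable.of_discrete (f := fun v : past → ℤ =>
      chain N (fun n j ℓ v => if h : (n, j, ℓ) ∈ past then v ⟨_, h⟩ else 0) i v))
    (Measurable.of_discrete (f := fun (v : now → ℤ) (j : Fin N) (ℓ : Fin 2) =>
      v ⟨(i, j, ℓ), hmem j ℓ⟩))
  have hchain : chain N Y i = (fun v : past → ℤ =>
      chain N (fun n j ℓ v => if h : (n, j, ℓ) ∈ past then v ⟨_, h⟩ else 0) i v) ∘
      fun ω (q : past) => Y q.1.1 q.1.2.1 q.1.2.2 ω :=
    funext fun ω => chain_congr fun n hn j hj ℓ => by rw [dif_pos (by simp [past, hn, hj])]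
  rw [hchain]
  exact key

lemma measure_sum_ite_noise_lt_le [IsProbabilityMeasure μ] (hmeas : ∀ n j ℓ, Measurable (Y n j ℓ))
    (hiid : iIndepFun (fun q : ℕ × ℕ × Fin 2 => Y q.1 q.2.1 q.2.2) μ) {p : ℝ}
    (hlaw : ∀ q : ℕ × ℕ × Fin 2, μ.map (Y q.1 q.2.1 q.2.2) = bernoulliStep p)
    (hp0 : 0 ≤ p) (hp1 : p ≤ 1 / 2) {δ : ℝ} (hδ0 : 0 ≤ δ) (hδ1 : δ < 1) (i : ℕ) {d : ℤ}
    (hd : d = 0 ∨ d = 1) (s : Finset (Fin N)) :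
    μ {ω | ∑ q ∈ s ×ˢ Finset.univ, (if Y i q.1 q.2 ω = d then (1 : ℝ) else 0) <
      2 * stepWeight p d * (1 - δ) * s.card} ≤
      ENNReal.ofReal (Real.exp (-(s.card * p * δ ^ 2))) := by
  set r := stepWeight p d
  have hr : p ≤ r ∧ r ≤ 1 := by unfold r stepWeight; split_ifs <;> constructor <;> linarith
  let Z : Fin N × Fin 2 → Ω → ℝ := fun q ω => if Y i q.1 q.2 ω = d then 1 else 0
  have hZ : iIndepFun Z μ :=
    (hiid.precomp (g := fun q : Fin N × Fin 2 => (i, (q.1 : ℕ), q.2)) fun q q' h => by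
      simp only [Prod.mk.injEq] at h; exact Prod.ext (Fin.ext h.2.1) h.2.2).comp
      (fun _ z => if z = d then (1 : ℝ) else 0) fun _ => Measurable.of_discrete
  have hchernoff := chernoff_lower_tail (Z := Z) (fun q =>
    (Measurable.of_discrete (f := fun z : ℤ => if z = d then (1 : ℝ) else 0)).comp (hmeas _ _ _)) hZ
    (le_trans hp0 hr.1) hr.2 (fun q => mgf_ite_eq_of_map_eq_bernoulliStep (hmeas _ _ _) hp0
      (by linarith) (hlaw (i, q.1, q.2)) hd) (s ×ˢ Finset.univ) hδ0 hδ1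
  have hcard : ((s ×ˢ (Finset.univ : Finset (Fin 2))).card : ℝ) = 2 * s.card := by
    simp [mul_comm]
  rw [hcard] at hchernoff
  calc μ {ω | ∑ q ∈ s ×ˢ Finset.univ, Z q ω < 2 * r * (1 - δ) * s.card}
      ≤ μ {ω | ∑ q ∈ s ×ˢ Finset.univ, Z q ω ≤ (1 - δ) * r * (2 * s.card)} :=
        measure_mono fun ω (hω : _ < _) =>
          show _ ≤ (1 - δ) * r * (2 * (s.card : ℝ)) from hω.le.trans_eq (by ring)
    _ = ENNReal.ofReal (μ.real {ω | ∑ q ∈ s ×ˢ Finset.univ, Z q ω ≤ (1 - δ) * r * (2 * s.card)}) :=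
        (ENNReal.ofReal_toReal (measure_ne_top _ _)).symm
    _ ≤ _ := by
        refine ENNReal.ofReal_le_ofReal (hchernoff.trans (Real.exp_le_exp.2 ?_))
        have := mul_le_mul_of_nonneg_left hr.1 (Nat.cast_nonneg (α := ℝ) s.card)
        nlinarith [sq_nonneg δ]

theorem measure_badStep_le [IsProbabilityMeasure μ] (hmeas : ∀ n j ℓ, Measurable (Y n j ℓ))
    (hiid : iIndepFun (fun q : ℕ × ℕ × Fin 2 => Y q.1 q.2.1 q.2.2) μ) {p : ℝ}
    (hlaw : ∀ q : ℕ × ℕ × Fin 2, μ.map (Y q.1 q.2.1 q.2.2) = bernoulliStep p)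
    (hp0 : 0 ≤ p) (hp1 : p ≤ 1 / 2) {δ : ℝ} (hδ0 : 0 ≤ δ) (hδ1 : δ < 1) (n₀ : ℝ) (i : ℕ)
    (x : ℤ) {d : ℤ} (hd : d = 0 ∨ d = 1) :
    μ (badStep N Y p δ n₀ i x d) ≤ ENNReal.ofReal (Real.exp (-(n₀ * p * δ ^ 2))) := by
  classical
  let sites : (Fin N → ℤ) → Finset (Fin N) := fun v => Finset.univ.filter fun j => v j = x
  let C' : Finset (Fin N) → Set (Fin N → Fin 2 → ℤ) := fun s => {w | n₀ ≤ s.card ∧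
    ∑ q ∈ s ×ˢ Finset.univ, (if w q.1 q.2 = d then (1 : ℝ) else 0) <
      2 * stepWeight p d * (1 - δ) * s.card}
  let C : Finset (Fin N) → Set Ω := fun s => (fun ω (j : Fin N) ℓ => Y i j ℓ ω) ⁻¹' C' s
  have hsub : badStep N Y p δ n₀ i x d ⊆ {ω | ω ∈ C (sites (chain N Y i ω))} := fun ω hω => by
    simp only [badStep, count_population, childCount_eq_sum] at hω
    exact hω
  refine (measure_mono hsub).trans (measure_le_of_forall_fiber (sites ∘ chain N Y i)
    (fun s => measurable_chain hmeas i (MeasurableSet.of_discrete (s := sites ⁻¹' {s}))) C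
    fun s => ?_)
  have hindep : μ (sites ∘ chain N Y i ⁻¹' {s} ∩ C s) =
      μ (sites ∘ chain N Y i ⁻¹' {s}) * μ (C s) :=
    (indepFun_chain_noise hmeas hiid i).measure_inter_preimage_eq_mul (sites ⁻¹' {s}) (C' s)
      MeasurableSet.of_discrete MeasurableSet.of_discrete
  rw [hindep]
  gcongr
  by_cases hs : n₀ ≤ s.card
  · refine (measure_mono fun ω hω => hω.2).trans <|
      (measure_sum_ite_noise_lt_le hmeas hiid hlaw hp0 hp1 hδ0 hδ1 i hd s).trans <|
        ENNReal.ofReal_le_ofReal (Real.exp_le_exp.2 ?_)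
    nlinarith [mul_le_mul_of_nonneg_right hs (mul_nonneg hp0 (sq_nonneg δ))]
  · simp [C, C', hs]

lemma exists_measurable_noise {p : ℝ}
    (hiid : iIndepFun (fun q : ℕ × ℕ × Fin 2 => Y q.1 q.2.1 q.2.2) μ)
    (hlaw : ∀ q : ℕ × ℕ × Fin 2, μ.map (Y q.1 q.2.1 q.2.2) = bernoulliStep p) :
    ∃ Y' : ℕ → ℕ → Fin 2 → Ω → ℤ, (∀ n j ℓ, Measurable (Y' n j ℓ)) ∧
      iIndepFun (fun q : ℕ × ℕ × Fin 2 => Y' q.1 q.2.1 q.2.2) μ ∧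
      (∀ q : ℕ × ℕ × Fin 2, μ.map (Y' q.1 q.2.1 q.2.2) = bernoulliStep p) ∧
      ∀ᵐ ω ∂μ, ∀ n j ℓ, Y n j ℓ ω = Y' n j ℓ ω := by
  have haem (q : ℕ × ℕ × Fin 2) : AEMeasurable (Y q.1 q.2.1 q.2.2) μ :=
    aemeasurable_of_map_neZero ⟨hlaw q ▸ bernoulliStep_ne_zero p⟩
  refine ⟨fun n j ℓ => (haem (n, j, ℓ)).mk, fun n j ℓ => (haem (n, j, ℓ)).measurable_mk,
    hiid.congr fun q => (haem q).ae_eq_mk, fun q => ?_, ?_⟩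
  · rw [← Measure.map_congr (haem q).ae_eq_mk, hlaw q]
  · exact ae_all_iff.2 fun n => ae_all_iff.2 fun j => ae_all_iff.2 fun ℓ =>
      (haem (n, j, ℓ)).ae_eq_mk

variable {p vp ε α β δ : ℝ} {m : ℕ} {ν : ℕ → ℤ → ℝ}

theorem measure_forall_minPop_lt_le [IsProbabilityMeasure μ]
    (hmeas : ∀ n j ℓ, Measurable (Y n j ℓ))
    (hiid : iIndepFun (fun q : ℕ × ℕ × Fin 2 => Y q.1 q.2.1 q.2.2) μ)
    (hlaw : ∀ q : ℕ × ℕ × Fin 2, μ.map (Y q.1 q.2.1 q.2.2) = bernoulliStep p)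
    (hp0 : 0 ≤ p) (hp1 : p ≤ 1 / 2) (hε : 0 ≤ ε) (hα0 : 0 ≤ vp - α) (hα1 : vp - α ≤ 1)
    (hβ : 1 < β) (hν : Admissible p vp ε α β m ν) (hN : 0 < N) (hδ0 : 0 ≤ δ) (hδ1 : δ < 1)
    (hδm : (1 - δ) ^ m = β⁻¹) :
    μ {ω | ∀ i, 1 ≤ i → i ≤ m → (minPop (chain N Y i ω) : ℝ) < (vp - α) * i} ≤
      ENNReal.ofReal (2 * (∑ i ∈ Finset.range m, ((Function.support (ν i)).ncard : ℝ)) *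
        Real.exp (-(N * β⁻¹ * ε * p * δ ^ 2))) := by
  let T : Finset (Σ _ : ℕ, ℤ × ℤ) :=
    (Finset.range m).sigma fun i => (hν.finite_support i).toFinset ×ˢ {0, 1}
  have hsub : {ω | ∀ i, 1 ≤ i → i ≤ m → (minPop (chain N Y i ω) : ℝ) < (vp - α) * i} ⊆
      ⋃ t ∈ T, badStep N Y p δ (N * β⁻¹ * ε) t.1 t.2.1 t.2.2 := fun ω hω => by
    obtain ⟨i, hi, x, hx, d, hd, hbad⟩ := exists_bad_step (X := fun i => chain N Y i ω)
      (y := fun i j ℓ => Y i j ℓ ω) hN rfl (fun i => rfl) hν hp0 (by linarith) hε hβ hδ0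
      hδ1.le hδm hα0 hα1 hω
    refine Set.mem_biUnion (?_ : (⟨i, x, d⟩ : Σ _ : ℕ, ℤ × ℤ) ∈ T) hbad
    simp [T, hi, hx.ne', hd]
  have hT : (T.card : ℝ) = 2 * ∑ i ∈ Finset.range m, ((Function.support (ν i)).ncard : ℝ) := by
    simp [T, Finset.card_sigma, Finset.mul_sum,
      Set.ncard_eq_toFinset_card _ (hν.finite_support _), mul_comm]
  calc _ ≤ ∑ t ∈ T, μ (badStep N Y p δ (N * β⁻¹ * ε) t.1 t.2.1 t.2.2) :=
        (measure_mono hsub).trans (measure_biUnion_finset_le _ _)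
    _ ≤ ∑ t ∈ T, ENNReal.ofReal (Real.exp (-(N * β⁻¹ * ε * p * δ ^ 2))) :=
        Finset.sum_le_sum fun t ht => by
          refine (measure_badStep_le hmeas hiid hlaw hp0 hp1 hδ0 hδ1 _ _ _ ?_).trans_eq
            (by ring_nf)
          simp only [T, Finset.mem_sigma, Finset.mem_product, Finset.mem_insert,
            Finset.mem_singleton] at ht
          exact ht.2.2
    _ = _ := by
        rw [Finset.sum_const, nsmul_eq_mul, ← hT, ← ENNReal.ofReal_natCast,
          ← ENNReal.ofReal_mul (Nat.cast_nonneg _)]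

end Noise

theorem admissible_sequence_event_bound_general
    (p : ℝ) (hp0 : 0 < p) (hp1 : p < 1 / 2)
    (vp : ℝ) (hvp1 : vp ≤ 1)
    (ε : ℝ) (hε : 0 < ε)
    (α : ℝ) (hα0 : 0 < α) (hα1 : α < vp)
    (β : ℝ) (hβ : 1 < β)
    (m : ℕ)
    (ν : ℕ → ℤ → ℝ) (hν : Admissible p vp ε α β m ν)
    (Ω : Type*) [MeasureSpace Ω] [IsProbabilityMeasure (ℙ : Measure Ω)]
    (Y : ℕ → ℕ → Fin 2 → Ω → ℤ)
    (hiid : iIndepFun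
      (fun q : ℕ × ℕ × Fin 2 => Y q.1 q.2.1 q.2.2) ℙ)
    (hlaw : ∀ q : ℕ × ℕ × Fin 2, Measure.map (Y q.1 q.2.1 q.2.2) ℙ = bernoulliStep p)
    (N : ℕ) (hN : 1 ≤ N)
    (K δ : ℝ)
    (hK : K = ∑ i ∈ Finset.range m, ((Function.support (ν i)).ncard : ℝ))
    (hδ : δ = 1 - Real.exp (-(Real.log β) / m)) :
    ℙ {ω | ∀ i : ℕ, 1 ≤ i → i ≤ m → (minPop (chain N Y i ω) : ℝ) < (vp - α) * i} ≤
      ENNReal.ofReal (2 * K * Real.exp (-(N : ℝ) * β⁻¹ * ε * p * δ ^ 2)) := by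
  obtain ⟨Y', hmeas, hiid', hlaw', hae⟩ := exists_measurable_noise hiid hlaw
  have hm : (m : ℝ) ≠ 0 := Nat.cast_ne_zero.2 (Nat.one_le_iff_ne_zero.1 (hν.one_le hβ))
  have hexp : Real.exp (-Real.log β / m) ≤ 1 :=
    Real.exp_le_one_iff.2 (div_nonpos_of_nonpos_of_nonneg (by linarith [Real.log_pos hβ])
      (Nat.cast_nonneg m))
  have hδm : (1 - δ) ^ m = β⁻¹ := by
    rw [hδ, sub_sub_cancel, ← Real.exp_nat_mul, mul_div_cancel₀ _ hm, Real.exp_neg,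
      Real.exp_log (by linarith)]
  have hevent : {ω | ∀ i : ℕ, 1 ≤ i → i ≤ m → (minPop (chain N Y i ω) : ℝ) < (vp - α) * i}
      =ᵐ[ℙ] {ω | ∀ i : ℕ, 1 ≤ i → i ≤ m → (minPop (chain N Y' i ω) : ℝ) < (vp - α) * i} :=
    hae.mono fun ω hω => congrArg
      (fun X : ℕ → Fin N → ℤ => ∀ i : ℕ, 1 ≤ i → i ≤ m → (minPop (X i) : ℝ) < (vp - α) * i)
      (funext fun i => chain_congr fun n _ j _ ℓ => hω n j ℓ)
  rw [measure_congr hevent, hK, neg_mul, neg_mul, neg_mul, neg_mul]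
  exact measure_forall_minPop_lt_le hmeas hiid' hlaw' hp0.le hp1.le hε.le (by linarith)
    (by linarith) hβ hν hN (by linarith) (by linarith [Real.exp_pos (-Real.log β / m)]) hδm

/-- **Lemma (use of admissible sequences):** given an `(ε,α,β)`-admissible sequence
`ν₀, …, ν_m`, with `K = Σ_{i<m} #supp(ν_i)` and `δ = 1 − exp(−log β / m)`, the event
`B` that `min X^N_i < (v(p) − α)·i` for all `1 ≤ i ≤ m` satisfies
`P(B) ≤ 2K·exp(−N·β⁻¹·ε·p·δ²)`. -/
theorem admissible_sequence_event_bound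
    (p : ℝ) (hp0 : 0 < p) (hp1 : p < 1 / 2)
    (vp : ℝ) (hvp0 : 0 ≤ vp) (hvp1 : vp ≤ 1) (hvproot : rateFn p vp = Real.log 2)
    (ε : ℝ) (hε : 0 < ε)
    (α : ℝ) (hα0 : 0 < α) (hα1 : α < vp)
    (β : ℝ) (hβ : 1 < β)
    (m : ℕ) (hm : qval vp ≤ m)
    (ν : ℕ → ℤ → ℝ) (hν : Admissible p vp ε α β m ν)
    (Ω : Type*) [MeasureSpace Ω] [IsProbabilityMeasure (ℙ : Measure Ω)]
    (Y : ℕ → ℕ → Fin 2 → Ω → ℤ)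
    (hiid : iIndepFun
      (fun q : ℕ × ℕ × Fin 2 => Y q.1 q.2.1 q.2.2) ℙ)
    (hlaw : ∀ q : ℕ × ℕ × Fin 2, Measure.map (Y q.1 q.2.1 q.2.2) ℙ = bernoulliStep p)
    (N : ℕ) (hN : 1 ≤ N)
    (K δ : ℝ)
    (hK : K = ∑ i ∈ Finset.range m, ((Function.support (ν i)).ncard : ℝ))
    (hδ : δ = 1 - Real.exp (-(Real.log β) / m)) :
    ℙ {ω | ∀ i : ℕ, 1 ≤ i → i ≤ m → (minPop (chain N Y i ω) : ℝ) < (vp - α) * i} ≤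
      ENNReal.ofReal (2 * K * Real.exp (-(N : ℝ) * β⁻¹ * ε * p * δ ^ 2)) :=
  admissible_sequence_event_bound_general p hp0 hp1 vp hvp1 ε hε α hα0 hα1 β hβ m ν hν Ω Y hiid hlaw
    N hN K δ hK hδ

end
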